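/- Let H be a complex Hilbert space, (u_n)_{n≥1} an orthonormal (Hilbert) basis of H, T a bounded bijective linear operator on H, and set g_n := T u_n (so (g_n) is a Riesz basis for H). Let (g̃_n)_{n≥1} be a sequence in H biorthogonal to (g_n) (⟨g_m, g̃_n⟩ = 1 if m = n and 0 otherwise) such that every f ∈ H satisfies f = Σ_{n=1}^∞ ⟨f, g̃_n⟩ g_n with convergence in H. Let (e_n)_{n≥1} be a frame for H, let β ∈ (0,1], γ > 0, C > 0 with |⟨e_m, g_n⟩| ≤ C·e^{−γ|m−n|^β} and |⟨e_m, g̃_n⟩| ≤ C·e^{−γ|m−n|^β} for all m, n. Let μ be a β_μ-sub-exponential weight with β_μ < β and μ(n) ≥ 1 for all n ∈ ℕ, and let p ∈ [1,∞). Then there exists K > 0 such that for every f ∈ H with Σ_n |⟨f, g̃_n⟩|^p μ(n)^p < ∞, one has Σ_m |⟨f, e_m⟩|^p μ(m)^p ≤ K^p · Σ_n |⟨f, g̃_n⟩|^p μ(n)^p. That is, the analysis operator U_E f = (⟨f, e_m⟩)_{m≥1} maps H_G^{ℓ^p_μ} boundedly into ℓ^p_μ. -/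

import Mathlib

/-!
Expanding `f = ∑ ⟨f, g̃ₙ⟩ gₙ` gives `|⟨f, eₘ⟩| ≤ ∑ₙ |⟨f, g̃ₙ⟩| |⟨eₘ, gₙ⟩|`. Since `β_μ < β`, the
weight ratio `μ(m) / μ(n) ≤ C_μ e^{γ' |m - n|^{β_μ}}` is absorbed by half of the decay
`e^{-γ |m - n|^β}`, so the weighted frame coefficients of `f` are dominated by the convolution of its
weighted dual-basis coefficients with a kernel summable over `ℤ`. Young's inequality
`‖k * b‖_p ≤ ‖k‖₁ ‖b‖_p`, obtained from the Schur test, concludes. Working in `ℝ≥0∞` avoids any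
a priori summability of the series involved.
-/

open Real Filter Asymptotics
open scoped ENNReal

namespace ENNReal

variable {ι κ : Type*} {p : ℝ}

theorem tsum_inner_le_weight_mul_Lp (hp : 1 ≤ p) (w f : ι → ℝ≥0∞) :
    ∑' i, w i * f i ≤ (∑' i, w i) ^ (1 - p⁻¹) * (∑' i, w i * f i ^ p) ^ p⁻¹ := by
  rw [ENNReal.tsum_eq_iSup_sum]
  refine iSup_le fun s => (inner_le_weight_mul_Lp_of_nonneg s hp w f).trans ?_
  gcongr
  · simp [inv_le_one_of_one_le₀ hp]
  · exact ENNReal.sum_le_tsum s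
  · exact ENNReal.sum_le_tsum s

theorem tsum_mul_rpow_le (hp : 1 ≤ p) (w f : ι → ℝ≥0∞) :
    (∑' i, w i * f i) ^ p ≤ (∑' i, w i) ^ (p - 1) * ∑' i, w i * f i ^ p := by
  have hp₀ : 0 < p := by linarith
  calc (∑' i, w i * f i) ^ p
      ≤ ((∑' i, w i) ^ (1 - p⁻¹) * (∑' i, w i * f i ^ p) ^ p⁻¹) ^ p := by
        gcongr; exact tsum_inner_le_weight_mul_Lp hp w f
    _ = (∑' i, w i) ^ (p - 1) * ∑' i, w i * f i ^ p := by
        rw [mul_rpow_of_nonneg _ _ hp₀.le, ← rpow_mul, ← rpow_mul, sub_mul,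
          inv_mul_cancel₀ hp₀.ne', one_mul, rpow_one]

/-- **Schur test** on `ℓ^p`. -/
theorem tsum_rpow_tsum_mul_le (hp : 1 ≤ p) (K : ι → κ → ℝ≥0∞) (b : κ → ℝ≥0∞) {S : ℝ≥0∞}
    (hrow : ∀ i, ∑' j, K i j ≤ S) (hcol : ∀ j, ∑' i, K i j ≤ S) :
    ∑' i, (∑' j, K i j * b j) ^ p ≤ S ^ p * ∑' j, b j ^ p := by
  have hp₁ : 0 ≤ p - 1 := by linarith
  calc ∑' i, (∑' j, K i j * b j) ^ p
      ≤ ∑' i, S ^ (p - 1) * ∑' j, K i j * b j ^ p := by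
        gcongr with i
        exact (tsum_mul_rpow_le hp _ _).trans (by gcongr; exact hrow i)
    _ = S ^ (p - 1) * ∑' j, (∑' i, K i j) * b j ^ p := by
        rw [ENNReal.tsum_mul_left, ENNReal.tsum_comm]
        simp_rw [ENNReal.tsum_mul_right]
    _ ≤ S ^ (p - 1) * ∑' j, S * b j ^ p := by gcongr with j; exact hcol j
    _ = S ^ p * ∑' j, b j ^ p := by
        rw [ENNReal.tsum_mul_left, ← mul_assoc]
        congr 1
        conv_rhs => rw [← sub_add_cancel p 1, rpow_add_of_nonneg _ _ hp₁ zero_le_one, rpow_one]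

theorem tsum_rpow_tsum_conv_le (hp : 1 ≤ p) (k : ℤ → ℝ≥0∞) (b : ℕ → ℝ≥0∞) :
    ∑' m : ℕ, (∑' n : ℕ, k (m - n) * b n) ^ p ≤ (∑' j, k j) ^ p * ∑' n, b n ^ p :=
  tsum_rpow_tsum_mul_le hp (fun m n : ℕ => k (m - n)) b
    (fun m => tsum_comp_le_tsum_of_injective (fun _ _ h => by simpa using h) k)
    (fun n => tsum_comp_le_tsum_of_injective (fun _ _ h => by simpa using h) k)

end ENNReal

theorem exists_forall_mul_rpow_le_mul_rpow_add {a b α β : ℝ} (ha : 0 ≤ a) (hb : 0 < b)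
    (hα : 0 ≤ α) (hαβ : α < β) : ∃ D, ∀ s, 0 ≤ s → a * s ^ α ≤ b * s ^ β + D := by
  set T := (a / b) ^ (β - α)⁻¹
  have hβα : 0 < β - α := sub_pos.mpr hαβ
  refine ⟨a * T ^ α, fun s hs => ?_⟩
  rcases le_total s T with hsT | hTs
  · have : a * s ^ α ≤ a * T ^ α := by gcongr
    have : 0 ≤ b * s ^ β := by positivity
    linarith
  · have hab : a / b ≤ s ^ (β - α) := by
      calc a / b = T ^ (β - α) := (rpow_inv_rpow (by positivity) hβα.ne').symm
        _ ≤ s ^ (β - α) := by gcongr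
    have : a * s ^ α ≤ b * s ^ β :=
      calc a * s ^ α ≤ b * s ^ (β - α) * s ^ α := by
            gcongr; rwa [div_le_iff₀' hb] at hab
        _ = b * s ^ β := by
            rw [mul_assoc, ← rpow_add' hs (by linarith), sub_add_cancel]
    have : 0 ≤ a * T ^ α := by positivity
    linarith

theorem exists_exp_neg_mul_rpow_mul_le {μ : ℝ → ℝ} {β βμ γ Cμ γ' : ℝ} (hμ : ∀ x, 0 ≤ μ x)
    (hγ : 0 < γ) (hCμ : 0 < Cμ) (hγ' : 0 ≤ γ') (hβμ : 0 ≤ βμ) (hβμβ : βμ < β)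
    (hsub : ∀ t x, μ (t + x) ≤ Cμ * exp (γ' * |t| ^ βμ) * μ x) :
    ∃ A > 0, ∀ x y, exp (-γ * |x - y| ^ β) * μ x ≤ A * exp (-(γ / 2 * |x - y| ^ β)) * μ y := by
  obtain ⟨D, hD⟩ := exists_forall_mul_rpow_le_mul_rpow_add hγ' (half_pos hγ) hβμ hβμβ
  refine ⟨Cμ * exp D, by positivity, fun x y => ?_⟩
  set s := |x - y|
  have hμxy : μ x ≤ Cμ * exp (γ' * s ^ βμ) * μ y := by
    simpa only [sub_add_cancel] using hsub (x - y) y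
  have hdecay : exp (-γ * s ^ β) * exp (γ' * s ^ βμ) ≤ exp D * exp (-(γ / 2 * s ^ β)) := by
    rw [← exp_add, ← exp_add, exp_le_exp]
    linarith [hD s (abs_nonneg _)]
  calc exp (-γ * s ^ β) * μ x
      ≤ exp (-γ * s ^ β) * (Cμ * exp (γ' * s ^ βμ) * μ y) := by gcongr
    _ = Cμ * (exp (-γ * s ^ β) * exp (γ' * s ^ βμ)) * μ y := by ring
    _ ≤ Cμ * (exp D * exp (-(γ / 2 * s ^ β))) * μ y := by gcongr; exact hμ y
    _ = Cμ * exp D * exp (-(γ / 2 * s ^ β)) * μ y := by ring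

theorem summable_exp_neg_mul_rpow {c β : ℝ} (hc : 0 < c) (hβ : 0 < β) :
    Summable fun n : ℕ => exp (-(c * (n : ℝ) ^ β)) := by
  -- `log x = o(x ^ β)`, so eventually `exp (-(c * x ^ β)) ≤ x ^ (-2)`
  have hlog : ∀ᶠ x : ℝ in atTop, ‖log x‖ ≤ c / 2 * ‖x ^ β‖ :=
    (isLittleO_log_rpow_atTop hβ).def (by positivity)
  have hbound : ∀ᶠ x : ℝ in atTop, exp (-(c * x ^ β)) ≤ 1 / x ^ 2 := by
    filter_upwards [hlog, eventually_ge_atTop 1] with x hx hx1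
    have hx0 : 0 < x := one_pos.trans_le hx1
    rw [norm_of_nonneg (log_nonneg hx1), norm_of_nonneg (by positivity)] at hx
    rw [one_div, ← exp_log (pow_pos hx0 2), ← exp_neg, exp_le_exp, log_pow]
    push_cast
    linarith
  refine summable_of_isBigO_nat (Real.summable_one_div_nat_pow.mpr one_lt_two) ?_
  refine IsBigO.of_bound 1 ?_
  filter_upwards [tendsto_natCast_atTop_atTop.eventually hbound] with n hn
  rw [one_mul, norm_of_nonneg (exp_pos _).le, norm_of_nonneg (by positivity)]
  exact hn

theorem summable_exp_neg_mul_abs_rpow {c β : ℝ} (hc : 0 < c) (hβ : 0 < β) :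
    Summable fun j : ℤ => exp (-(c * |(j : ℝ)| ^ β)) := by
  apply Summable.of_nat_of_neg <;>
    simpa using summable_exp_neg_mul_rpow hc hβ

theorem tsum_ofReal_mul_exp_neg_mul_abs_rpow_ne_top {a c β : ℝ} (ha : 0 ≤ a) (hc : 0 < c)
    (hβ : 0 < β) : ∑' j : ℤ, ENNReal.ofReal (a * exp (-(c * |(j : ℝ)| ^ β))) ≠ ∞ := by
  rw [← ENNReal.ofReal_tsum_of_nonneg (fun j => by positivity)
    ((summable_exp_neg_mul_abs_rpow hc hβ).mul_left a)]
  exact ENNReal.ofReal_ne_top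

theorem enorm_inner_le_tsum_of_hasSum {𝕜 E : Type*} [RCLike 𝕜] [NormedAddCommGroup E]
    [InnerProductSpace 𝕜 E] {ι : Type*} {c : ι → 𝕜} {g : ι → E} {f : E}
    (hf : HasSum (fun i => c i • g i) f) (e : E) :
    ‖(inner 𝕜 f e : 𝕜)‖ₑ ≤ ∑' i, ‖c i‖ₑ * ‖(inner 𝕜 e (g i) : 𝕜)‖ₑ := by
  have hsum : HasSum (fun i => c i * inner 𝕜 e (g i)) (inner 𝕜 e f) := by
    simpa [inner_smul_right] using hf.mapL (innerSL 𝕜 e)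
  rw [← ofReal_norm, norm_inner_symm, ofReal_norm, ← hsum.tsum_eq]
  simpa only [enorm_mul] using enorm_tsum_le_tsum_enorm (f := fun i => c i * inner 𝕜 e (g i))

theorem enorm_inner_mul_le_tsum_of_hasSum {𝕜 E : Type*} [RCLike 𝕜] [NormedAddCommGroup E]
    [InnerProductSpace 𝕜 E] {ι : Type*} {c : ι → 𝕜} {g : ι → E} {f : E}
    (hf : HasSum (fun i => c i • g i) f) (e : E) {v : ℝ≥0∞} {k w : ι → ℝ≥0∞}
    (h : ∀ i, ‖(inner 𝕜 e (g i) : 𝕜)‖ₑ * v ≤ k i * w i) :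
    ‖(inner 𝕜 f e : 𝕜)‖ₑ * v ≤ ∑' i, k i * (‖c i‖ₑ * w i) :=
  calc ‖(inner 𝕜 f e : 𝕜)‖ₑ * v
      ≤ (∑' i, ‖c i‖ₑ * ‖(inner 𝕜 e (g i) : 𝕜)‖ₑ) * v := by
        gcongr; exact enorm_inner_le_tsum_of_hasSum hf e
    _ = ∑' i, ‖c i‖ₑ * (‖(inner 𝕜 e (g i) : 𝕜)‖ₑ * v) := by
        rw [← ENNReal.tsum_mul_right]; simp_rw [mul_assoc]
    _ ≤ ∑' i, ‖c i‖ₑ * (k i * w i) := ENNReal.tsum_le_tsum fun i => mul_le_mul_right (h i) _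
    _ = ∑' i, k i * (‖c i‖ₑ * w i) := tsum_congr fun i => by ring

theorem ofReal_norm_rpow_mul_rpow {E : Type*} [SeminormedAddGroup E] (z : E) {x p : ℝ}
    (hx : 0 ≤ x) (hp : 0 ≤ p) :
    ENNReal.ofReal (‖z‖ ^ p * x ^ p) = (‖z‖ₑ * ENNReal.ofReal x) ^ p := by
  rw [← mul_rpow (norm_nonneg z) hx, ← ENNReal.ofReal_rpow_of_nonneg (by positivity) hp,
    ENNReal.ofReal_mul (norm_nonneg z), ofReal_norm]

theorem summable_and_tsum_le_of_tsum_ofReal_le {ι : Type*} {a b : ι → ℝ} (ha : ∀ i, 0 ≤ a i)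
    (hb : ∀ i, 0 ≤ b i) (hbs : Summable b) {K : ℝ} (hK : 0 ≤ K)
    (h : ∑' i, ENNReal.ofReal (a i) ≤ ENNReal.ofReal K * ∑' i, ENNReal.ofReal (b i)) :
    Summable a ∧ ∑' i, a i ≤ K * ∑' i, b i := by
  rw [← ENNReal.ofReal_tsum_of_nonneg hb hbs, ← ENNReal.ofReal_mul hK] at h
  have has : Summable a := by
    simpa [ENNReal.toReal_ofReal (ha _)] using
      ENNReal.summable_toReal (ne_top_of_le_ne_top ENNReal.ofReal_ne_top h)
  refine ⟨has, ?_⟩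
  rwa [← ENNReal.ofReal_tsum_of_nonneg ha has,
    ENNReal.ofReal_le_ofReal_iff (mul_nonneg hK (tsum_nonneg hb))] at h

theorem stmt_16_general {H : Type*} [NormedAddCommGroup H] [InnerProductSpace ℂ H]
    (g : ℕ → H)
    (gd : ℕ → H)
    (hexp : ∀ f : H, HasSum (fun n : ℕ => (inner ℂ f (gd n) : ℂ) • g n) f)
    (e : ℕ → H)
    (β γ C : ℝ) (hβ₀ : 0 < β) (hγ : 0 < γ) (hC : 0 < C)
    (hloc1 : ∀ m n : ℕ,
      ‖(inner ℂ (e m) (g n) : ℂ)‖ ≤ C * Real.exp (-γ * |(m:ℝ) - (n:ℝ)| ^ β))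
    (μ : ℝ → ℝ) (hμpos : ∀ x, 0 < μ x)
    (βμ : ℝ) (hβμ₀ : 0 < βμ) (hβμβ : βμ < β)
    (hsub : ∃ Cμ > (0:ℝ), ∃ γ' > (0:ℝ), ∀ t x : ℝ,
      μ (t + x) ≤ Cμ * Real.exp (γ' * |t| ^ βμ) * μ x)
    (p : ℝ) (hp : 1 ≤ p) :
    ∃ K > (0:ℝ), ∀ f : H,
      Summable (fun n : ℕ => ‖(inner ℂ f (gd n) : ℂ)‖ ^ p * μ ((n:ℝ) + 1) ^ p) →
      Summable (fun m : ℕ => ‖(inner ℂ f (e m) : ℂ)‖ ^ p * μ ((m:ℝ) + 1) ^ p) ∧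
      ∑' m : ℕ, ‖(inner ℂ f (e m) : ℂ)‖ ^ p * μ ((m:ℝ) + 1) ^ p
        ≤ K ^ p * ∑' n : ℕ, ‖(inner ℂ f (gd n) : ℂ)‖ ^ p * μ ((n:ℝ) + 1) ^ p := by
  obtain ⟨Cμ, hCμ, γ', hγ', hμsub⟩ := hsub
  obtain ⟨A, hA, hweight⟩ := exists_exp_neg_mul_rpow_mul_le (fun x => (hμpos x).le) hγ hCμ
    hγ'.le hβμ₀.le hβμβ hμsub
  set κ : ℤ → ℝ≥0∞ := fun j => ENNReal.ofReal (C * A * exp (-(γ / 2 * |(j : ℝ)| ^ β)))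
  have hκ_ne_top : ∑' j, κ j ≠ ∞ :=
    tsum_ofReal_mul_exp_neg_mul_abs_rpow_ne_top (by positivity) (half_pos hγ) hβ₀
  have hκ_pos : 0 < ∑' j, κ j :=
    (ENNReal.ofReal_pos.2 (by positivity)).trans_le (ENNReal.le_tsum 0)
  refine ⟨(∑' j, κ j).toReal, ENNReal.toReal_pos hκ_pos.ne' hκ_ne_top, fun f hf => ?_⟩
  have hpointwise : ∀ m : ℕ, ‖(inner ℂ f (e m) : ℂ)‖ₑ * ENNReal.ofReal (μ (m + 1))
      ≤ ∑' n : ℕ, κ (m - n) * (‖(inner ℂ f (gd n) : ℂ)‖ₑ * ENNReal.ofReal (μ (n + 1))) :=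
    fun m => enorm_inner_mul_le_tsum_of_hasSum (hexp f) (e m) fun n => by
      rw [← ofReal_norm, ← ENNReal.ofReal_mul (norm_nonneg _),
        ← ENNReal.ofReal_mul (by positivity)]
      push_cast
      refine ENNReal.ofReal_le_ofReal ?_
      calc ‖(inner ℂ (e m) (g n) : ℂ)‖ * μ (m + 1)
          ≤ C * (exp (-γ * |(m : ℝ) - n| ^ β) * μ (m + 1)) := by
            rw [← mul_assoc]; gcongr; exacts [(hμpos _).le, hloc1 m n]
        _ ≤ C * (A * exp (-(γ / 2 * |(m : ℝ) - n| ^ β)) * μ (n + 1)) := by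
            gcongr C * ?_
            simpa only [add_sub_add_right_eq_sub] using hweight (m + 1) (n + 1)
        _ = C * A * exp (-(γ / 2 * |(m : ℝ) - n| ^ β)) * μ (n + 1) := by ring
  have hterm_nonneg : ∀ (z : ℂ) (x : ℝ), 0 ≤ ‖z‖ ^ p * μ x ^ p := fun z x =>
    mul_nonneg (rpow_nonneg (norm_nonneg z) p) (rpow_nonneg (hμpos x).le p)
  refine summable_and_tsum_le_of_tsum_ofReal_le (fun m => hterm_nonneg _ _)
    (fun n => hterm_nonneg _ _) hf (by positivity) ?_
  rw [← ENNReal.ofReal_rpow_of_nonneg ENNReal.toReal_nonneg (by linarith),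
    ENNReal.ofReal_toReal hκ_ne_top]
  simp only [ofReal_norm_rpow_mul_rpow _ (hμpos _).le (by linarith : 0 ≤ p)]
  exact (ENNReal.tsum_le_tsum fun m => ENNReal.rpow_le_rpow (hpointwise m) (by linarith)).trans
    (ENNReal.tsum_rpow_tsum_conv_le hp κ _)

/-- Analysis operator boundedness: if a frame `(e_n)` is `β`-sub-exponentially (or
exponentially) localized with respect to a Riesz basis `(g_n)` with canonical dual
`(g̃_n)`, and `μ` is a `β_μ`-sub-exponential weight with `β_μ < β` and `μ(n) ≥ 1`,
then the analysis operator `f ↦ (⟨f,e_m⟩)_m` maps `H_G^{ℓ^p_μ}` boundedly into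
`ℓ^p_μ`. -/
theorem stmt_16 {H : Type*} [NormedAddCommGroup H] [InnerProductSpace ℂ H]
    [CompleteSpace H]
    (u : HilbertBasis ℕ ℂ H) (T : H →L[ℂ] H) (hT : Function.Bijective T)
    (g : ℕ → H) (hg : ∀ n, g n = T (u n))
    (gd : ℕ → H)
    (hbi : ∀ m n : ℕ, (inner ℂ (g m) (gd n) : ℂ) = if m = n then 1 else 0)
    (hexp : ∀ f : H, HasSum (fun n : ℕ => (inner ℂ f (gd n) : ℂ) • g n) f)
    (e : ℕ → H)
    (hframe : ∃ A B : ℝ, 0 < A ∧ A ≤ B ∧ ∀ f : H,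
      Summable (fun n : ℕ => ‖(inner ℂ f (e n) : ℂ)‖ ^ 2) ∧
      A * ‖f‖ ^ 2 ≤ ∑' n : ℕ, ‖(inner ℂ f (e n) : ℂ)‖ ^ 2 ∧
      ∑' n : ℕ, ‖(inner ℂ f (e n) : ℂ)‖ ^ 2 ≤ B * ‖f‖ ^ 2)
    (β γ C : ℝ) (hβ₀ : 0 < β) (hβ₁ : β ≤ 1) (hγ : 0 < γ) (hC : 0 < C)
    (hloc1 : ∀ m n : ℕ,
      ‖(inner ℂ (e m) (g n) : ℂ)‖ ≤ C * Real.exp (-γ * |(m:ℝ) - (n:ℝ)| ^ β))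
    (hloc2 : ∀ m n : ℕ,
      ‖(inner ℂ (e m) (gd n) : ℂ)‖ ≤ C * Real.exp (-γ * |(m:ℝ) - (n:ℝ)| ^ β))
    (μ : ℝ → ℝ) (hμpos : ∀ x, 0 < μ x) (hμcont : Continuous μ)
    (βμ : ℝ) (hβμ₀ : 0 < βμ) (hβμ₁ : βμ < 1) (hβμβ : βμ < β)
    (hsub : ∃ Cμ > (0:ℝ), ∃ γ' > (0:ℝ), ∀ t x : ℝ,
      μ (t + x) ≤ Cμ * Real.exp (γ' * |t| ^ βμ) * μ x)
    (hμ1 : ∀ n : ℕ, 1 ≤ μ ((n:ℝ) + 1))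
    (p : ℝ) (hp : 1 ≤ p) :
    ∃ K > (0:ℝ), ∀ f : H,
      Summable (fun n : ℕ => ‖(inner ℂ f (gd n) : ℂ)‖ ^ p * μ ((n:ℝ) + 1) ^ p) →
      Summable (fun m : ℕ => ‖(inner ℂ f (e m) : ℂ)‖ ^ p * μ ((m:ℝ) + 1) ^ p) ∧
      ∑' m : ℕ, ‖(inner ℂ f (e m) : ℂ)‖ ^ p * μ ((m:ℝ) + 1) ^ p
        ≤ K ^ p * ∑' n : ℕ, ‖(inner ℂ f (gd n) : ℂ)‖ ^ p * μ ((n:ℝ) + 1) ^ p :=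
  stmt_16_general g gd hexp e β γ C hβ₀ hγ hC hloc1 μ hμpos βμ hβμ₀ hβμβ hsub p hp
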